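/- (Matrix martingale-difference moment bound.) Let p ∈ [1,2], let (F_t)_{t≥0} be a filtration on a probability space, and let V_1, …, V_T be integrable random m×n real matrices such that V_t is F_t-measurable and E[V_t | F_{t−1}] = 0 for every t. Then E‖∑_{t=1}^T V_t‖_F ≤ 2√2 · E[(∑_{t=1}^T ‖V_t‖_F^p)^{1/p}]. -/

import Mathlib

open MeasureTheory ProbabilityTheory Matrix Finset

noncomputable section

/-- The Frobenius norm of a real `m × n` matrix. -/
def frob {m n : ℕ} (A : Matrix (Fin m) (Fin n) ℝ) : ℝ :=
  Real.sqrt (∑ i, ∑ j, A i j ^ 2)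

/-- Matrices are measurable via the product σ-algebra on their entries. -/
instance matrixMeasurableSpace {m n : ℕ} : MeasurableSpace (Matrix (Fin m) (Fin n) ℝ) :=
  (inferInstance : MeasurableSpace (Fin m → Fin n → ℝ))


private lemma L1 (X z a s w : ℝ) (hz : 0 ≤ z)
    (hzs : z ≤ s) (hzw : z ≤ w)
    (hs : s^2 = X^2 + z^2) (hw : w^2 = z^2 + a^2) (hX : 0 ≤ X) (ha : 0 ≤ a) :
    X*a ≤ s*w - z^2 := by
  have hB : 0 ≤ s*w - z^2 := by nlinarith [mul_le_mul hzs hzw hz (le_trans hz hzs)]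
  have hsq : (X*a)^2 ≤ (s*w - z^2)^2 := by nlinarith [sq_nonneg (z*(s-w))]
  nlinarith [hsq, hB, mul_nonneg hX ha]

private lemma L3 (z s X : ℝ) (hz : 0 ≤ z) (hzs : z ≤ s) (hX : 0 ≤ X)
    (hXz : X^2 = s^2 - z^2) :
    2.5*s*X*z ≤ 5*s^3 - 4.5*s^2*z + 2.5*s*z^2 - 2*z^3 := by
  have hs0 : 0 ≤ s := le_trans hz hzs
  have hP : 0 ≤ 5*s^3 - 4.5*s^2*z + 2.5*s*z^2 - 2*z^3 := by
    nlinarith [mul_nonneg (sub_nonneg.2 hzs) (by nlinarith [sq_nonneg (s+z)] : (0:ℝ) ≤ 5*s^2 + 0.5*s*z + 3*z^2), pow_nonneg hz 3]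
  have hsq : (2.5*s*X*z)^2 ≤ (5*s^3 - 4.5*s^2*z + 2.5*s*z^2 - 2*z^3)^2 := by
    have h62 : (2.5*s*X*z)^2 = 6.25*s^2*z^2*(s^2-z^2) := by
      linear_combination (6.25*s^2*z^2) * hXz
    rw [h62]
    nlinarith [sq_nonneg (s - z), sq_nonneg (s*(s-z)), sq_nonneg (z*(s-z)), mul_nonneg hz (le_trans hz hzs), sq_nonneg (s*z), mul_nonneg (mul_nonneg hz hz) (mul_nonneg hz hz), mul_nonneg (mul_nonneg hz hz) (sub_nonneg.2 hzs), sq_nonneg (s^2*(s-z)), sq_nonneg (z^2*(s-z)), sq_nonneg (s*z*(s-z)), mul_nonneg (mul_nonneg hz hz) (mul_nonneg hz (sub_nonneg.2 hzs))]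
  nlinarith [hsq, hP, mul_nonneg (mul_nonneg (mul_nonneg (by norm_num : (0:ℝ) ≤ 2.5) hs0) hX) hz]

set_option maxHeartbeats 1000000 in
private lemma poly_core (X z a t s w : ℝ) (hX : 0 ≤ X) (hz : 0 ≤ z) (ha : 0 ≤ a)
    (hs0 : 0 ≤ s) (hw0 : 0 ≤ w)
    (hs : s^2 = X^2 + z^2) (hw : w^2 = z^2 + a^2)
    (ht : -(X*a) ≤ t) :
    0 ≤ (t + (5/2)*s*(w-z))^2 + 2*s^2*(w-z)*((5/2)*s - w - z) := by
  have hzs : z ≤ s := by nlinarith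
  have hzw : z ≤ w := by nlinarith
  have haw : a ≤ w := by nlinarith
  have hXs : X ≤ s := by nlinarith
  rcases eq_or_lt_of_le hs0 with hseq | hspos
  · rw [← hseq]; nlinarith [sq_nonneg t]
  rcases le_or_gt (w + z) ((5/2)*s) with heasy | hhard
  · have hr : 0 ≤ w - z := by linarith
    nlinarith [sq_nonneg (t + (5/2)*s*(w-z)), mul_nonneg (mul_nonneg (sq_nonneg s) hr) (by linarith : (0:ℝ) ≤ (5/2)*s - w - z)]
  · have hrpos : 0 < w - z := by
      rcases eq_or_lt_of_le hz with hz0 | hzpos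
      · rw [← hz0] at hhard ⊢; simpa using lt_trans (by linarith) hhard
      · nlinarith
    rcases le_or_gt ((5/2)*s*(w-z)) (X*a) with subA | subB
    · -- contradiction with hhard
      exfalso
      have h1 : (5/2)*s*(w-z) ≤ s*a := le_trans subA (mul_le_mul_of_nonneg_right hXs ha)
      have h2 : (5/2)*(w-z) ≤ a := by
        have := (mul_le_mul_iff_right₀ hspos).1 (by linarith : s*((5/2)*(w-z)) ≤ s*a)
        linarith
      have h3 : (5/2*(w-z))^2 ≤ a^2 := by nlinarith
      have h4 : 6.25*(w-z) ≤ w+z := by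
        have hh : (w-z)*(6.25*(w-z)) ≤ (w-z)*(w+z) := by nlinarith [h3]
        exact le_of_mul_le_mul_left hh hrpos
      linarith
    · have hL1' : X*a ≤ s*w - z^2 := L1 X z a s w hz hzs hzw hs hw hX ha
      have hE : 2.5*s*X*z ≤ 5*s^3 - 4.5*s^2*z + 2.5*s*z^2 - 2*z^3 := L3 z s X hz hzs hX (by linarith)
      have hL2 : X*a ≤ X*w := mul_le_mul_of_nonneg_left haw hX
      have hco : 0 ≤ 2.75*s^2 - z^2 - 2.5*s*X := by nlinarith [sq_nonneg (X - 1.25*s)]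
      have hA1 : 2.5*s*(X*a) ≤ 2.5*s*(s*w - z^2) :=
        mul_le_mul_of_nonneg_left hL1' (by linarith : (0:ℝ) ≤ 2.5*s)
      have hA2 : 2.5*s*(X*a) ≤ 2.5*s*(X*w) :=
        mul_le_mul_of_nonneg_left hL2 (by linarith : (0:ℝ) ≤ 2.5*s)
      have hA3 : 0 ≤ (w-z)*(2.75*s^2 - z^2 - 2.5*s*X) := mul_nonneg (sub_nonneg.2 hzw) hco
      have hG : 0 ≤ w*(5.25*s^2-z^2) - z*(7.25*s^2+z^2) + 5*s^3 - 5*s*(X*a) := by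
        linarith [hA1, hA2, hA3, hE]
      have hrG : 0 ≤ (w-z) * (w*(5.25*s^2-z^2) - z*(7.25*s^2+z^2) + 5*s^3 - 5*s*(X*a)) :=
        mul_nonneg hrpos.le hG
      have hFid : ((5/2)*s*(w-z) - X*a)^2 - 2*s^2*(w-z)*(w + z - (5/2)*s)
          = (w-z) * (w*(5.25*s^2-z^2) - z*(7.25*s^2+z^2) + 5*s^3 - 5*s*(X*a)) := by
        have hX2 : X^2 = s^2 - z^2 := by linarith
        have ha2 : a^2 = w^2 - z^2 := by linarith
        linear_combination (a^2) * hX2 + (s^2 - z^2) * ha2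
      have htK : (0:ℝ) ≤ (5/2)*s*(w-z) - X*a := by linarith
      have hsq2 : ((5/2)*s*(w-z) - X*a)^2 ≤ (t + (5/2)*s*(w-z))^2 := by
        have h5 : (5/2)*s*(w-z) - X*a ≤ t + (5/2)*s*(w-z) := by linarith
        nlinarith [h5, htK]
      nlinarith [hrG, hFid, hsq2]

set_option maxHeartbeats 1000000 in
private lemma scalar_core (X z a t : ℝ) (hX : 0 ≤ X) (hz : 0 ≤ z) (ha : 0 ≤ a)
    (ht1 : -(X*a) ≤ t) (ht2 : t ≤ X*a) :
    Real.sqrt ((X^2 + 2*t + a^2) + (z^2 + a^2)) ≤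
      Real.sqrt (X^2+z^2) + t / Real.sqrt (X^2+z^2)
        + (5/2)*(Real.sqrt (z^2+a^2) - z) := by
  set s := Real.sqrt (X^2+z^2) with hsdef
  set w := Real.sqrt (z^2+a^2) with hwdef
  have hs2 : s^2 = X^2+z^2 := Real.sq_sqrt (by positivity)
  have hw2 : w^2 = z^2+a^2 := Real.sq_sqrt (by positivity)
  have hs0 : 0 ≤ s := Real.sqrt_nonneg _
  have hw0 : 0 ≤ w := Real.sqrt_nonneg _
  have hzs : z ≤ s := by nlinarith
  have hzw : z ≤ w := by nlinarith
  have hXs : X ≤ s := by nlinarith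
  have haw : a ≤ w := by nlinarith
  rcases eq_or_lt_of_le hs0 with hseq | hspos
  · -- s = 0 : X = 0, z = 0, t = 0
    have hX0 : X = 0 := by nlinarith
    have hz0 : z = 0 := by nlinarith
    have ht0 : t = 0 := le_antisymm (by rw [hX0] at ht2; simpa using ht2)
      (by rw [hX0] at ht1; simpa using ht1)
    rw [hX0, hz0, ht0]
    have hwa : w = a := by rw [hwdef, hz0]; simpa using Real.sqrt_sq ha
    have : Real.sqrt ((0^2 + 2*0 + a^2) + (0^2 + a^2)) ≤ (5/2) * a := by
      have h1 : (0^2 + 2*0 + a^2) + ((0:ℝ)^2 + a^2) ≤ ((5/2)*a)^2 := by nlinarith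
      calc Real.sqrt ((0^2 + 2*0 + a^2) + (0^2 + a^2)) ≤ Real.sqrt (((5/2)*a)^2) :=
            Real.sqrt_le_sqrt h1
        _ = (5/2)*a := Real.sqrt_sq (by positivity)
    calc Real.sqrt ((0^2 + 2*0 + a^2) + (0^2 + a^2)) ≤ (5/2)*a := this
      _ ≤ s + 0 / s + (5/2)*(w - 0) := by rw [hwa]; simp [div_nonneg]; positivity
  · -- main case s > 0
    have hKey := poly_core X z a t s w hX hz ha hs0 hw0 hs2 hw2 ht1
    have hXa_sw : X*a ≤ s*w := by nlinarith [mul_le_mul hXs haw ha hs0]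
    have htds : -w ≤ t/s := by
      rw [le_div_iff₀ hspos]
      nlinarith
    have hrhs0 : 0 ≤ s + t/s + (5/2)*(w-z) := by linarith
    have hid : (s^2 + t + (5/2)*s*(w-z))^2 - ((s^2+2*t+2*a^2))*s^2
        = (t + (5/2)*s*(w-z))^2 + 2*s^2*(w-z)*((5/2)*s - w - z) := by
      linear_combination (2*s^2) * hw2
    have hnum : (s^2+2*t+2*a^2) * s^2 ≤ (s^2 + t + (5/2)*s*(w-z))^2 := by linarith
    have hA : (X^2+2*t+a^2)+(z^2+a^2) = s^2 + 2*t + 2*a^2 := by rw [hs2]; ring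
    have hB : s + t/s + (5/2)*(w-z) = (s^2 + t + (5/2)*s*(w-z))/s := by
      field_simp
    have h1 : (X^2+2*t+a^2)+(z^2+a^2) ≤ (s + t/s + (5/2)*(w-z))^2 := by
      rw [hA, hB, div_pow, le_div_iff₀ (by positivity : (0:ℝ) < s^2)]
      exact hnum
    calc Real.sqrt ((X^2+2*t+a^2)+(z^2+a^2)) ≤ Real.sqrt ((s + t/s + (5/2)*(w-z))^2) :=
          Real.sqrt_le_sqrt h1
      _ = s + t/s + (5/2)*(w-z) := Real.sqrt_sq hrhs0


private lemma lp_sqrt_le {ι : Type*} (s : Finset ι) (f : ι → ℝ) (p : ℝ)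
    (hf : ∀ i ∈ s, 0 ≤ f i) (hp1 : 1 ≤ p) (hp2 : p ≤ 2) :
    Real.sqrt (∑ i ∈ s, f i ^ 2) ≤ (∑ i ∈ s, f i ^ p) ^ (1/p) := by
  have hp0 : 0 < p := lt_of_lt_of_le one_pos hp1
  have hsum0 : 0 ≤ ∑ i ∈ s, f i ^ p :=
    Finset.sum_nonneg (fun i hi => Real.rpow_nonneg (hf i hi) p)
  set B : ℝ := (∑ i ∈ s, f i ^ p) ^ (1/p) with hBdef
  have hB0 : 0 ≤ B := Real.rpow_nonneg hsum0 _
  have hBp : B ^ p = ∑ i ∈ s, f i ^ p := by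
    rw [hBdef, one_div]; exact Real.rpow_inv_rpow hsum0 (ne_of_gt hp0)
  have hfB : ∀ i ∈ s, f i ≤ B := by
    intro i hi
    have h1 : (f i ^ p) ^ (1/p) ≤ B := by
      rw [hBdef]
      exact Real.rpow_le_rpow (Real.rpow_nonneg (hf i hi) p)
        (Finset.single_le_sum (fun j hj => Real.rpow_nonneg (hf j hj) p) hi)
        (by positivity)
    rwa [one_div, Real.rpow_rpow_inv (hf i hi) (ne_of_gt hp0)] at h1
  have hkey : ∑ i ∈ s, f i ^ 2 ≤ B ^ 2 := by
    have h2 : ∀ i ∈ s, f i ^ 2 ≤ f i ^ p * B ^ (2 - p) := by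
      intro i hi
      have e1 : f i ^ (2:ℝ) = f i ^ p * f i ^ (2-p) := by
        rw [← Real.rpow_add_of_nonneg (hf i hi) (le_of_lt hp0) (by linarith)]
        norm_num
      have e2 : f i ^ (2:ℕ) = f i ^ (2:ℝ) := by
        rw [show (2:ℝ) = ((2:ℕ):ℝ) by norm_num, Real.rpow_natCast]
      calc f i ^ 2 = f i ^ p * f i ^ (2-p) := by rw [e2, e1]
        _ ≤ f i ^ p * B ^ (2-p) :=
            mul_le_mul_of_nonneg_left
              (Real.rpow_le_rpow (hf i hi) (hfB i hi) (by linarith))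
              (Real.rpow_nonneg (hf i hi) p)
    calc ∑ i ∈ s, f i ^ 2 ≤ ∑ i ∈ s, f i ^ p * B ^ (2-p) := Finset.sum_le_sum h2
      _ = (∑ i ∈ s, f i ^ p) * B ^ (2-p) := by rw [Finset.sum_mul]
      _ = B ^ p * B ^ (2-p) := by rw [hBp]
      _ = B ^ (2:ℝ) := by rw [← Real.rpow_add_of_nonneg hB0 (le_of_lt hp0) (by linarith)]; norm_num
      _ = B ^ 2 := by rw [show (2:ℝ) = ((2:ℕ):ℝ) by norm_num, Real.rpow_natCast]
  calc Real.sqrt (∑ i ∈ s, f i ^ 2) ≤ Real.sqrt (B^2) := Real.sqrt_le_sqrt hkey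
    _ = B := Real.sqrt_sq hB0

private lemma lp_le_sum {ι : Type*} (s : Finset ι) (f : ι → ℝ) (p : ℝ)
    (hf : ∀ i ∈ s, 0 ≤ f i) (hp1 : 1 ≤ p) :
    (∑ i ∈ s, f i ^ p) ^ (1/p) ≤ ∑ i ∈ s, f i := by
  have hp0 : 0 < p := lt_of_lt_of_le one_pos hp1
  set M : ℝ := ∑ i ∈ s, f i with hMdef
  have hM0 : 0 ≤ M := Finset.sum_nonneg hf
  have hkey : ∑ i ∈ s, f i ^ p ≤ M ^ p := by
    have h2 : ∀ i ∈ s, f i ^ p ≤ f i * M ^ (p-1) := by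
      intro i hi
      have e1 : f i ^ p = f i ^ (1:ℝ) * f i ^ (p-1) := by
        rw [← Real.rpow_add_of_nonneg (hf i hi) zero_le_one (by linarith)]
        norm_num
      calc f i ^ p = f i ^ (1:ℝ) * f i ^ (p-1) := e1
        _ ≤ f i ^ (1:ℝ) * M ^ (p-1) := by
            apply mul_le_mul_of_nonneg_left
              (Real.rpow_le_rpow (hf i hi) (Finset.single_le_sum hf hi) (by linarith))
            rw [Real.rpow_one]; exact hf i hi
        _ = f i * M ^ (p-1) := by rw [Real.rpow_one]
    calc ∑ i ∈ s, f i ^ p ≤ ∑ i ∈ s, f i * M ^ (p-1) := Finset.sum_le_sum h2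
      _ = M * M ^ (p-1) := by rw [Finset.sum_mul]
      _ = M ^ (1:ℝ) * M ^ (p-1) := by rw [Real.rpow_one]
      _ = M ^ p := by rw [← Real.rpow_add_of_nonneg hM0 zero_le_one (by linarith)]; norm_num
  calc (∑ i ∈ s, f i ^ p) ^ (1/p)
      ≤ (M ^ p) ^ (1/p) := Real.rpow_le_rpow
        (Finset.sum_nonneg (fun i hi => Real.rpow_nonneg (hf i hi) p)) hkey (by positivity)
    _ = M := by rw [one_div]; exact Real.rpow_rpow_inv hM0 (ne_of_gt hp0)

namespace FrobAux

variable {m n : ℕ}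

def ipM (A B : Matrix (Fin m) (Fin n) ℝ) : ℝ := ∑ i, ∑ j, A i j * B i j

lemma frob_nonneg (A : Matrix (Fin m) (Fin n) ℝ) : 0 ≤ frob A := Real.sqrt_nonneg _

lemma sum_sq_nonneg (A : Matrix (Fin m) (Fin n) ℝ) : 0 ≤ ∑ i, ∑ j, A i j ^ 2 := by positivity

lemma frob_sq (A : Matrix (Fin m) (Fin n) ℝ) : frob A ^ 2 = ∑ i, ∑ j, A i j ^ 2 :=
  Real.sq_sqrt (sum_sq_nonneg A)

lemma frob_add_expand (A B : Matrix (Fin m) (Fin n) ℝ) :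
    frob (A + B) ^ 2 = frob A ^ 2 + 2 * ipM A B + frob B ^ 2 := by
  rw [frob_sq, frob_sq, frob_sq, ipM]
  simp only [Matrix.add_apply, add_sq, Finset.sum_add_distrib, Finset.mul_sum]
  congr 1
  congr 1
  apply Finset.sum_congr rfl; intro i _
  apply Finset.sum_congr rfl; intro j _
  ring

lemma ipM_sq_le (A B : Matrix (Fin m) (Fin n) ℝ) :
    (ipM A B)^2 ≤ (frob A * frob B)^2 := by
  rw [mul_pow, frob_sq, frob_sq, ipM]
  have h1 : (∑ p ∈ (univ : Finset (Fin m)) ×ˢ (univ : Finset (Fin n)), A p.1 p.2 * B p.1 p.2)^2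
      ≤ (∑ p ∈ (univ : Finset (Fin m)) ×ˢ (univ : Finset (Fin n)), A p.1 p.2 ^2) *
        (∑ p ∈ (univ : Finset (Fin m)) ×ˢ (univ : Finset (Fin n)), B p.1 p.2 ^2) :=
    Finset.sum_mul_sq_le_sq_mul_sq _ _ _
  simpa [Fintype.sum_prod_type] using h1

lemma ipM_le (A B : Matrix (Fin m) (Fin n) ℝ) : ipM A B ≤ frob A * frob B := by
  nlinarith [ipM_sq_le A B, mul_nonneg (frob_nonneg A) (frob_nonneg B)]

lemma neg_le_ipM (A B : Matrix (Fin m) (Fin n) ℝ) : -(frob A * frob B) ≤ ipM A B := by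
  nlinarith [ipM_sq_le A B, mul_nonneg (frob_nonneg A) (frob_nonneg B)]

lemma ipM_smul (c : ℝ) (A B : Matrix (Fin m) (Fin n) ℝ) :
    ipM (c • A) B = c * ipM A B := by
  rw [ipM, ipM, Finset.mul_sum]
  congr 1; ext i; rw [Finset.mul_sum]; congr 1; ext j
  simp [Matrix.smul_apply]; ring

lemma frob_add_le (A B : Matrix (Fin m) (Fin n) ℝ) : frob (A+B) ≤ frob A + frob B := by
  have h : frob (A+B)^2 ≤ (frob A + frob B)^2 := by
    rw [frob_add_expand]; nlinarith [ipM_le A B]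
  calc frob (A+B) = Real.sqrt (frob (A+B)^2) := (Real.sqrt_sq (frob_nonneg _)).symm
    _ ≤ Real.sqrt ((frob A + frob B)^2) := Real.sqrt_le_sqrt h
    _ = frob A + frob B := Real.sqrt_sq (add_nonneg (frob_nonneg A) (frob_nonneg B))

lemma abs_entry_le_frob (A : Matrix (Fin m) (Fin n) ℝ) (i : Fin m) (j : Fin n) :
    |A i j| ≤ frob A := by
  rw [frob]
  rw [show |A i j| = Real.sqrt (A i j ^2) by rw [Real.sqrt_sq_eq_abs]]
  apply Real.sqrt_le_sqrt
  calc A i j ^2 ≤ ∑ j', A i j' ^2 :=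
        Finset.single_le_sum (f := fun j' => A i j' ^2) (fun j' _ => sq_nonneg _) (Finset.mem_univ j)
    _ ≤ ∑ i', ∑ j', A i' j' ^2 :=
        Finset.single_le_sum (f := fun i' => ∑ j', A i' j' ^2)
          (fun i' _ => by positivity) (Finset.mem_univ i)

lemma entry_abs_le_sum_abs (A : Matrix (Fin m) (Fin n) ℝ) (i : Fin m) (j : Fin n) :
    |A i j| ≤ ∑ i', ∑ j', |A i' j'| := by
  calc |A i j| ≤ ∑ j', |A i j'| :=
        Finset.single_le_sum (f := fun j' => |A i j'|) (fun j' _ => abs_nonneg _) (Finset.mem_univ j)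
    _ ≤ ∑ i', ∑ j', |A i' j'| :=
        Finset.single_le_sum (f := fun i' => ∑ j', |A i' j'|)
          (fun i' _ => by positivity) (Finset.mem_univ i)

lemma frob_le_sum_abs (A : Matrix (Fin m) (Fin n) ℝ) : frob A ≤ ∑ i, ∑ j, |A i j| := by
  have h : ∑ i, ∑ j, A i j ^2 ≤ (∑ i, ∑ j, |A i j|)^2 := by
    have h1 : ∀ i j, A i j ^2 ≤ |A i j| * (∑ i', ∑ j', |A i' j'|) := by
      intro i j
      have h2 : A i j ^2 = |A i j| * |A i j| := by rw [← abs_mul, abs_mul_self]; ring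
      rw [h2]
      exact mul_le_mul_of_nonneg_left (entry_abs_le_sum_abs A i j) (abs_nonneg _)
    calc ∑ i, ∑ j, A i j ^2 ≤ ∑ i, ∑ j, |A i j| * (∑ i', ∑ j', |A i' j'|) :=
          Finset.sum_le_sum (fun i _ => Finset.sum_le_sum (fun j _ => h1 i j))
      _ = (∑ i, ∑ j, |A i j|)^2 := by
          simp only [← Finset.sum_mul]; ring
  calc frob A = Real.sqrt (∑ i, ∑ j, A i j ^2) := rfl
    _ ≤ Real.sqrt ((∑ i, ∑ j, |A i j|)^2) := Real.sqrt_le_sqrt h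
    _ = ∑ i, ∑ j, |A i j| := Real.sqrt_sq (by positivity)

end FrobAux

namespace FrobAux

variable {m n : ℕ}

lemma frob_zero : frob (0 : Matrix (Fin m) (Fin n) ℝ) = 0 := by
  simp [frob]

lemma frob_sum_le {ι : Type*} (s : Finset ι) (f : ι → Matrix (Fin m) (Fin n) ℝ) :
    frob (∑ i ∈ s, f i) ≤ ∑ i ∈ s, frob (f i) := by
  classical
  induction s using Finset.induction_on with
  | empty => simp [frob_zero]
  | @insert a s' hx ih =>
    rw [Finset.sum_insert hx, Finset.sum_insert hx]
    calc frob (f a + ∑ i ∈ s', f i) ≤ frob (f a) + frob (∑ i ∈ s', f i) := frob_add_le _ _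
      _ ≤ frob (f a) + ∑ i ∈ s', frob (f i) := by linarith [ih]

lemma frob_le_sqrt_sq_add (x : Matrix (Fin m) (Fin n) ℝ) (q : ℝ) (hq : 0 ≤ q) :
    frob x ≤ Real.sqrt (frob x ^ 2 + q) := by
  calc frob x = Real.sqrt (frob x ^ 2) := (Real.sqrt_sq (frob_nonneg x)).symm
    _ ≤ Real.sqrt (frob x ^ 2 + q) := Real.sqrt_le_sqrt (by linarith)

lemma inv_sqrt_entry_bound (x : Matrix (Fin m) (Fin n) ℝ) (q : ℝ) (hq : 0 ≤ q)
    (i : Fin m) (j : Fin n) :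
    |(Real.sqrt (frob x ^ 2 + q))⁻¹ * x i j| ≤ 1 := by
  set s := Real.sqrt (frob x ^ 2 + q) with hsdef
  have hs0 : 0 ≤ s := Real.sqrt_nonneg _
  have hxs : |x i j| ≤ s := le_trans (abs_entry_le_frob x i j) (frob_le_sqrt_sq_add x q hq)
  rcases eq_or_lt_of_le hs0 with hs | hs
  · have : x i j = 0 := by
      have := abs_nonneg (x i j)
      have := hxs
      rw [← hs] at this
      have habs : |x i j| = 0 := le_antisymm this (abs_nonneg _)
      exact abs_eq_zero.1 habs
    simp [this]
  · rw [abs_mul, abs_inv, abs_of_nonneg hs0]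
    calc s⁻¹ * |x i j| ≤ s⁻¹ * s := mul_le_mul_of_nonneg_left hxs (inv_nonneg.2 hs0)
      _ = 1 := inv_mul_cancel₀ (ne_of_gt hs)

lemma matrix_step (x d : Matrix (Fin m) (Fin n) ℝ) (q : ℝ) (hq : 0 ≤ q) :
    Real.sqrt (frob (x + d) ^ 2 + (q + frob d ^ 2)) - (5/2) * Real.sqrt (q + frob d ^ 2)
      ≤ (Real.sqrt (frob x ^ 2 + q) - (5/2) * Real.sqrt q)
        + (Real.sqrt (frob x ^ 2 + q))⁻¹ * ipM x d := by
  have hz : (0:ℝ) ≤ Real.sqrt q := Real.sqrt_nonneg _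
  have hz2 : Real.sqrt q ^ 2 = q := Real.sq_sqrt hq
  have h := scalar_core (frob x) (Real.sqrt q) (frob d) (ipM x d)
    (frob_nonneg x) hz (frob_nonneg d) (neg_le_ipM x d) (ipM_le x d)
  rw [hz2] at h
  have hexp : frob x ^ 2 + 2 * ipM x d + frob d ^ 2 = frob (x + d) ^ 2 :=
    (frob_add_expand x d).symm
  rw [hexp] at h
  have hdiv : ipM x d / Real.sqrt (frob x ^ 2 + q) =
      (Real.sqrt (frob x ^ 2 + q))⁻¹ * ipM x d := div_eq_inv_mul _ _
  rw [hdiv] at h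
  linarith

lemma ipM_eq_sum (c : ℝ) (A B : Matrix (Fin m) (Fin n) ℝ) :
    c * ipM A B = ∑ i, ∑ j, (c * A i j) * B i j := by
  rw [ipM, Finset.mul_sum]
  congr 1; ext i; rw [Finset.mul_sum]; congr 1; ext j; ring

end FrobAux

private lemma sqrt_sum_sq_le_sum {ι : Type*} (s : Finset ι) (f : ι → ℝ)
    (hf : ∀ i ∈ s, 0 ≤ f i) :
    Real.sqrt (∑ i ∈ s, f i ^ 2) ≤ ∑ i ∈ s, f i := by
  have hM0 : 0 ≤ ∑ i ∈ s, f i := Finset.sum_nonneg hf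
  have h : ∑ i ∈ s, f i ^ 2 ≤ (∑ i ∈ s, f i) ^ 2 := by
    calc ∑ i ∈ s, f i ^ 2 ≤ ∑ i ∈ s, f i * (∑ i' ∈ s, f i') := by
          apply Finset.sum_le_sum
          intro i hi
          calc f i ^ 2 = f i * f i := sq (f i) ▸ by ring
            _ ≤ f i * (∑ i' ∈ s, f i') :=
                mul_le_mul_of_nonneg_left (Finset.single_le_sum hf hi) (hf i hi)
      _ = (∑ i ∈ s, f i) ^ 2 := by rw [← Finset.sum_mul]; ring
  calc Real.sqrt (∑ i ∈ s, f i ^ 2) ≤ Real.sqrt ((∑ i ∈ s, f i) ^ 2) := Real.sqrt_le_sqrt h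
    _ = ∑ i ∈ s, f i := Real.sqrt_sq hM0

private lemma sqrt_sq_add_le (x q : ℝ) (hx : 0 ≤ x) (hq : 0 ≤ q) :
    Real.sqrt (x ^ 2 + q) ≤ x + Real.sqrt q := by
  have h : x ^ 2 + q ≤ (x + Real.sqrt q) ^ 2 := by
    have := Real.sq_sqrt hq
    nlinarith [mul_nonneg hx (Real.sqrt_nonneg q)]
  calc Real.sqrt (x ^ 2 + q) ≤ Real.sqrt ((x + Real.sqrt q) ^ 2) := Real.sqrt_le_sqrt h
    _ = x + Real.sqrt q := Real.sqrt_sq (by positivity)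
open FrobAux in
set_option maxHeartbeats 1600000 in
/-- **Matrix martingale-difference moment bound** (matrix version of Lemma 4.3 of
Liu & Zhou 2024): if `p ∈ [1,2]`, `(F_t)` is a filtration, and `V_1, …, V_T` are integrable
random matrices with `V_t` being `F_t`-measurable and `E[V_t | F_{t-1}] = 0`, then
`E‖∑_{t=1}^T V_t‖_F ≤ 2√2 E[(∑_{t=1}^T ‖V_t‖_F^p)^{1/p}]`. -/
theorem matrix_martingale_difference_moment_bound
    {Ω : Type} {m0 : MeasurableSpace Ω} (μ : Measure Ω) [IsProbabilityMeasure μ]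
    {m n : ℕ} (p : ℝ) (hp1 : 1 ≤ p) (hp2 : p ≤ 2)
    (F : Filtration ℕ m0) (T : ℕ) (V : ℕ → Ω → Matrix (Fin m) (Fin n) ℝ)
    (hadapted : ∀ t, 1 ≤ t → t ≤ T → Measurable[F t] (V t))
    (hint : ∀ t, 1 ≤ t → t ≤ T → ∀ i j, Integrable (fun ω => V t ω i j) μ)
    (hmart : ∀ t, 1 ≤ t → t ≤ T → ∀ i j,
      μ[fun ω => V t ω i j|F (t - 1)] =ᵐ[μ] 0) :
    ∫ ω, frob (∑ t ∈ Finset.Icc 1 T, V t ω) ∂μ ≤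
      2 * Real.sqrt 2 *
        ∫ ω, (∑ t ∈ Finset.Icc 1 T, frob (V t ω) ^ p) ^ (1/p) ∂μ := by
  classical
  have hp0 : 0 < p := lt_of_lt_of_le one_pos hp1
  -- abbreviations
  set S : ℕ → Ω → Matrix (Fin m) (Fin n) ℝ := fun k ω => ∑ s ∈ Finset.Icc 1 k, V s ω with hSdef
  set Q : ℕ → Ω → ℝ := fun k ω => ∑ s ∈ Finset.Icc 1 k, frob (V s ω) ^ 2 with hQdef
  set Y : ℕ → Ω → ℝ :=
    fun k ω => Real.sqrt (frob (S k ω) ^ 2 + Q k ω) - (5/2) * Real.sqrt (Q k ω) with hYdef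
  have hQnn : ∀ k ω, 0 ≤ Q k ω := by
    intro k ω; rw [hQdef]; exact Finset.sum_nonneg (fun s _ => sq_nonneg _)
  -- measurability (ambient)
  have hVm : ∀ s, 1 ≤ s → s ≤ T → Measurable (V s) :=
    fun s h1 h2 => (hadapted s h1 h2).mono (F.le s) le_rfl
  have hVijm : ∀ s, 1 ≤ s → s ≤ T → ∀ (i : Fin m) (j : Fin n),
      Measurable (fun ω => V s ω i j) :=
    fun s h1 h2 i j => (measurable_pi_apply j).comp ((measurable_pi_apply i).comp (hVm s h1 h2))
  have hfrobVm : ∀ s, 1 ≤ s → s ≤ T → Measurable (fun ω => frob (V s ω)) := by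
    intro s h1 h2
    have : (fun ω => frob (V s ω)) =
        fun ω => Real.sqrt (∑ i, ∑ j, V s ω i j ^ 2) := by funext ω; rfl
    rw [this]
    exact Real.continuous_sqrt.measurable.comp
      (Finset.measurable_sum _ (fun i _ => Finset.measurable_sum _
        (fun j _ => (hVijm s h1 h2 i j).pow_const 2)))
  have hSijm : ∀ k, k ≤ T → ∀ (i : Fin m) (j : Fin n), Measurable (fun ω => S k ω i j) := by
    intro k hk i j
    have : (fun ω => S k ω i j) = fun ω => ∑ s ∈ Finset.Icc 1 k, V s ω i j := by
      funext ω; rw [hSdef]; exact Matrix.sum_apply i j _ _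
    rw [this]
    exact Finset.measurable_sum _ (fun s hs =>
      hVijm s (Finset.mem_Icc.1 hs).1 (le_trans (Finset.mem_Icc.1 hs).2 hk) i j)
  have hfrobSm : ∀ k, k ≤ T → Measurable (fun ω => frob (S k ω)) := by
    intro k hk
    have : (fun ω => frob (S k ω)) =
        fun ω => Real.sqrt (∑ i, ∑ j, S k ω i j ^ 2) := by funext ω; rfl
    rw [this]
    exact Real.continuous_sqrt.measurable.comp
      (Finset.measurable_sum _ (fun i _ => Finset.measurable_sum _
        (fun j _ => (hSijm k hk i j).pow_const 2)))
  have hQm : ∀ k, k ≤ T → Measurable (Q k) := by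
    intro k hk
    rw [hQdef]
    exact Finset.measurable_sum _ (fun s hs =>
      (hfrobVm s (Finset.mem_Icc.1 hs).1 (le_trans (Finset.mem_Icc.1 hs).2 hk)).pow_const 2)
  have hYm : ∀ k, k ≤ T → Measurable (Y k) := by
    intro k hk
    rw [hYdef]
    exact (Real.continuous_sqrt.measurable.comp
        (((hfrobSm k hk).pow_const 2).add (hQm k hk))).sub
      ((Real.continuous_sqrt.measurable.comp (hQm k hk)).const_mul (5/2))
  -- dominating function
  set g : Ω → ℝ := fun ω => ∑ s ∈ Finset.Icc 1 T, ∑ i, ∑ j, |V s ω i j| with hgdef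
  have hgint : Integrable g μ := by
    rw [hgdef]
    exact integrable_finset_sum _ (fun s hs => integrable_finset_sum _ (fun i _ =>
      integrable_finset_sum _ (fun j _ =>
        (hint s (Finset.mem_Icc.1 hs).1 (Finset.mem_Icc.1 hs).2 i j).abs)))
  have hg0 : ∀ ω, 0 ≤ g ω := by
    intro ω; rw [hgdef]
    exact Finset.sum_nonneg (fun s _ => Finset.sum_nonneg (fun i _ =>
      Finset.sum_nonneg (fun j _ => abs_nonneg _)))
  have hsumfrob_le_g : ∀ k, k ≤ T → ∀ ω, (∑ s ∈ Finset.Icc 1 k, frob (V s ω)) ≤ g ω := by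
    intro k hk ω
    rw [hgdef]
    calc (∑ s ∈ Finset.Icc 1 k, frob (V s ω))
        ≤ ∑ s ∈ Finset.Icc 1 k, ∑ i, ∑ j, |V s ω i j| :=
          Finset.sum_le_sum (fun s _ => frob_le_sum_abs (V s ω))
      _ ≤ ∑ s ∈ Finset.Icc 1 T, ∑ i, ∑ j, |V s ω i j| :=
          Finset.sum_le_sum_of_subset_of_nonneg
            (Finset.Icc_subset_Icc_right hk)
            (fun s _ _ => Finset.sum_nonneg (fun i _ =>
              Finset.sum_nonneg (fun j _ => abs_nonneg _)))
  have hfrobS_le : ∀ k ω, frob (S k ω) ≤ ∑ s ∈ Finset.Icc 1 k, frob (V s ω) := by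
    intro k ω; rw [hSdef]; exact frob_sum_le _ _
  have hsqrtQ_le : ∀ k ω, Real.sqrt (Q k ω) ≤ ∑ s ∈ Finset.Icc 1 k, frob (V s ω) := by
    intro k ω; rw [hQdef]
    exact sqrt_sum_sq_le_sum _ _ (fun s _ => frob_nonneg _)
  have hYbdd : ∀ k, k ≤ T → ∀ ω, ‖Y k ω‖ ≤ (9/2) * g ω := by
    intro k hk ω
    have h1 : frob (S k ω) ≤ g ω := le_trans (hfrobS_le k ω) (hsumfrob_le_g k hk ω)
    have h2 : Real.sqrt (Q k ω) ≤ g ω := le_trans (hsqrtQ_le k ω) (hsumfrob_le_g k hk ω)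
    have h3 : Real.sqrt (frob (S k ω) ^ 2 + Q k ω) ≤ frob (S k ω) + Real.sqrt (Q k ω) :=
      sqrt_sq_add_le _ _ (frob_nonneg _) (hQnn k ω)
    have h4 : 0 ≤ Real.sqrt (frob (S k ω) ^ 2 + Q k ω) := Real.sqrt_nonneg _
    have h5 : 0 ≤ Real.sqrt (Q k ω) := Real.sqrt_nonneg _
    rw [hYdef, Real.norm_eq_abs, abs_le]
    constructor <;> simp only <;> nlinarith
  have hYint : ∀ k, k ≤ T → Integrable (Y k) μ := by
    intro k hk
    exact Integrable.mono' (hgint.const_mul (9/2)) (hYm k hk).aestronglyMeasurable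
      (Filter.Eventually.of_forall (hYbdd k hk))
  -- the supermartingale-type induction
  have key : ∀ k, k ≤ T → ∫ ω, Y k ω ∂μ ≤ 0 := by
    intro k
    induction k with
    | zero =>
      intro _
      have h0 : Y 0 = fun _ => (0:ℝ) := by
        funext ω
        rw [hYdef, hSdef, hQdef]
        simp only
        rw [show Finset.Icc 1 0 = (∅ : Finset ℕ) from Finset.Icc_eq_empty (by omega)]
        simp [frob_zero]
      rw [h0]
      simp
    | succ k ih =>
      intro hk1
      have hkT : k ≤ T := le_trans (Nat.le_succ k) hk1
      have h1k1 : 1 ≤ k + 1 := Nat.succ_le_succ (Nat.zero_le k)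
      set c : Ω → ℝ := fun ω => (Real.sqrt (frob (S k ω) ^ 2 + Q k ω))⁻¹ with hcdef
      set φ : Ω → ℝ := fun ω => c ω * ipM (S k ω) (V (k+1) ω) with hφdef
      have hstep : ∀ ω, Y (k+1) ω ≤ Y k ω + φ ω := by
        intro ω
        have hS1 : S (k+1) ω = S k ω + V (k+1) ω := by
          rw [hSdef]; exact Finset.sum_Icc_succ_top h1k1 _
        have hQ1 : Q (k+1) ω = Q k ω + frob (V (k+1) ω) ^ 2 := by
          rw [hQdef]; exact Finset.sum_Icc_succ_top h1k1 _
        have h := matrix_step (S k ω) (V (k+1) ω) (Q k ω) (hQnn k ω)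
        rw [hYdef, hφdef, hcdef]
        simp only
        rw [hS1, hQ1]
        linarith
      -- F k measurability of the multiplier entries
      have hVFm : ∀ s, 1 ≤ s → s ≤ k → Measurable[F k] (V s) :=
        fun s h1 h2 => (hadapted s h1 (le_trans h2 hkT)).mono (F.mono h2) le_rfl
      have hVijFm : ∀ s, 1 ≤ s → s ≤ k → ∀ (i : Fin m) (j : Fin n),
          Measurable[F k] (fun ω => V s ω i j) :=
        fun s h1 h2 i j =>
          (measurable_pi_apply j).comp ((measurable_pi_apply i).comp (hVFm s h1 h2))
      have hSijFm : ∀ (i : Fin m) (j : Fin n), Measurable[F k] (fun ω => S k ω i j) := by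
        intro i j
        have : (fun ω => S k ω i j) = fun ω => ∑ s ∈ Finset.Icc 1 k, V s ω i j := by
          funext ω; rw [hSdef]; exact Matrix.sum_apply i j _ _
        rw [this]
        exact Finset.measurable_sum _ (fun s hs =>
          hVijFm s (Finset.mem_Icc.1 hs).1 (Finset.mem_Icc.1 hs).2 i j)
      have hfrobSFm : Measurable[F k] (fun ω => frob (S k ω)) := by
        have : (fun ω => frob (S k ω)) =
            fun ω => Real.sqrt (∑ i, ∑ j, S k ω i j ^ 2) := by funext ω; rfl
        rw [this]
        exact Real.continuous_sqrt.measurable.comp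
          (Finset.measurable_sum _ (fun i _ => Finset.measurable_sum _
            (fun j _ => (hSijFm i j).pow_const 2)))
      have hQFm : Measurable[F k] (Q k) := by
        rw [hQdef]
        apply Finset.measurable_sum
        intro s hs
        have h1 := (Finset.mem_Icc.1 hs).1
        have h2 := (Finset.mem_Icc.1 hs).2
        have hfm : Measurable[F k] (fun ω => frob (V s ω)) := by
          have heq : (fun ω => frob (V s ω)) =
              fun ω => Real.sqrt (∑ i, ∑ j, V s ω i j ^ 2) := by funext ω; rfl
          rw [heq]
          exact Real.continuous_sqrt.measurable.comp
            (Finset.measurable_sum _ (fun i _ => Finset.measurable_sum _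
              (fun j _ => (hVijFm s h1 h2 i j).pow_const 2)))
        exact hfm.pow_const 2
      have hcFm : Measurable[F k] c := by
        rw [hcdef]
        exact (Real.continuous_sqrt.measurable.comp
          (((hfrobSFm).pow_const 2).add hQFm)).inv
      have hLFm : ∀ (i : Fin m) (j : Fin n),
          Measurable[F k] (fun ω => c ω * S k ω i j) :=
        fun i j => hcFm.mul (hSijFm i j)
      have hLbdd : ∀ (i : Fin m) (j : Fin n) ω, ‖c ω * S k ω i j‖ ≤ 1 := by
        intro i j ω
        rw [Real.norm_eq_abs, hcdef]
        exact inv_sqrt_entry_bound (S k ω) (Q k ω) (hQnn k ω) i j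
      have hVint1 : ∀ (i : Fin m) (j : Fin n), Integrable (fun ω => V (k+1) ω i j) μ :=
        fun i j => hint (k+1) h1k1 hk1 i j
      have hLm0 : ∀ (i : Fin m) (j : Fin n), Measurable (fun ω => c ω * S k ω i j) :=
        fun i j => (hLFm i j).mono (F.le k) le_rfl
      have hLVint : ∀ (i : Fin m) (j : Fin n),
          Integrable (fun ω => (c ω * S k ω i j) * V (k+1) ω i j) μ :=
        fun i j => Integrable.bdd_mul (hVint1 i j) (hLm0 i j).aestronglyMeasurable
          (Filter.Eventually.of_forall (fun ω => hLbdd i j ω))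
      have hzero : ∀ (i : Fin m) (j : Fin n),
          ∫ ω, (c ω * S k ω i j) * V (k+1) ω i j ∂μ = 0 := by
        intro i j
        have hm := hmart (k+1) h1k1 hk1 i j
        rw [Nat.add_sub_cancel] at hm
        have hpull :
            μ[(fun ω => c ω * S k ω i j) * (fun ω => V (k+1) ω i j)|F k]
              =ᵐ[μ] (fun ω => c ω * S k ω i j) * μ[(fun ω => V (k+1) ω i j)|F k] :=
          condExp_stronglyMeasurable_mul_of_bound (F.le k)
            (hLFm i j).stronglyMeasurable (hVint1 i j) 1
            (Filter.Eventually.of_forall (fun ω => hLbdd i j ω))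
        have heq1 : ∫ ω, (c ω * S k ω i j) * V (k+1) ω i j ∂μ
            = ∫ ω, (μ[(fun ω => c ω * S k ω i j) * (fun ω => V (k+1) ω i j)|F k]) ω ∂μ :=
          (integral_condExp (F.le k)).symm
        rw [heq1, integral_congr_ae hpull]
        have hzero2 : (fun ω => c ω * S k ω i j) * μ[(fun ω => V (k+1) ω i j)|F k]
            =ᵐ[μ] fun _ => (0:ℝ) := by
          filter_upwards [hm] with ω hω
          simp [hω]
        rw [integral_congr_ae hzero2]
        simp
      have hφsum : φ = fun ω => ∑ i, ∑ j, (c ω * S k ω i j) * V (k+1) ω i j := by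
        funext ω
        rw [hφdef]
        simp only
        exact ipM_eq_sum (c ω) (S k ω) (V (k+1) ω)
      have hφint : Integrable φ μ := by
        rw [hφsum]
        exact integrable_finset_sum _ (fun i _ =>
          integrable_finset_sum _ (fun j _ => hLVint i j))
      have hφ0 : ∫ ω, φ ω ∂μ = 0 := by
        rw [hφsum]
        rw [integral_finset_sum _ (fun i _ =>
          integrable_finset_sum _ (fun j _ => hLVint i j))]
        rw [Finset.sum_eq_zero]
        intro i _
        rw [integral_finset_sum _ (fun j _ => hLVint i j)]
        exact Finset.sum_eq_zero (fun j _ => hzero i j)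
      have h2 : ∫ ω, Y (k+1) ω ∂μ ≤ ∫ ω, (Y k ω + φ ω) ∂μ :=
        integral_mono (hYint (k+1) hk1) ((hYint k hkT).add hφint) hstep
      rw [integral_add (hYint k hkT) hφint, hφ0] at h2
      have h3 := ih hkT
      linarith
  -- conclusion
  have hkeyT := key T le_rfl
  set Rp : Ω → ℝ := fun ω => (∑ s ∈ Finset.Icc 1 T, frob (V s ω) ^ p) ^ (1/p) with hRpdef
  have hRp_nonneg : ∀ ω, 0 ≤ Rp ω := by
    intro ω; rw [hRpdef]
    exact Real.rpow_nonneg (Finset.sum_nonneg (fun s _ => Real.rpow_nonneg (frob_nonneg _) p)) _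
  have hsqrtQ_le_Rp : ∀ ω, Real.sqrt (Q T ω) ≤ Rp ω := by
    intro ω; rw [hQdef, hRpdef]
    exact lp_sqrt_le _ _ p (fun s _ => frob_nonneg _) hp1 hp2
  have hRp_le_g : ∀ ω, Rp ω ≤ g ω := by
    intro ω
    calc Rp ω ≤ ∑ s ∈ Finset.Icc 1 T, frob (V s ω) :=
          lp_le_sum _ _ p (fun s _ => frob_nonneg _) hp1
      _ ≤ g ω := hsumfrob_le_g T le_rfl ω
  have hRpm : Measurable Rp := by
    rw [hRpdef]
    exact (Real.continuous_rpow_const (by positivity)).measurable.comp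
      (Finset.measurable_sum _ (fun s hs =>
        (Real.continuous_rpow_const (le_of_lt hp0)).measurable.comp
          (hfrobVm s (Finset.mem_Icc.1 hs).1 (Finset.mem_Icc.1 hs).2)))
  have hRpint : Integrable Rp μ := by
    apply Integrable.mono' hgint hRpm.aestronglyMeasurable
    exact Filter.Eventually.of_forall (fun ω => by
      rw [Real.norm_eq_abs, abs_of_nonneg (hRp_nonneg ω)]; exact hRp_le_g ω)
  have hsqrtQTm : Measurable (fun ω => Real.sqrt (Q T ω)) :=
    Real.continuous_sqrt.measurable.comp (hQm T le_rfl)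
  have hsqrtQTint : Integrable (fun ω => Real.sqrt (Q T ω)) μ := by
    apply Integrable.mono' hgint hsqrtQTm.aestronglyMeasurable
    exact Filter.Eventually.of_forall (fun ω => by
      rw [Real.norm_eq_abs, abs_of_nonneg (Real.sqrt_nonneg _)]
      exact le_trans (hsqrtQ_le T ω) (hsumfrob_le_g T le_rfl ω))
  have hfrobSTint : Integrable (fun ω => frob (S T ω)) μ := by
    apply Integrable.mono' hgint (hfrobSm T le_rfl).aestronglyMeasurable
    exact Filter.Eventually.of_forall (fun ω => by
      rw [Real.norm_eq_abs, abs_of_nonneg (frob_nonneg _)]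
      exact le_trans (hfrobS_le T ω) (hsumfrob_le_g T le_rfl ω))
  have hmain : ∫ ω, frob (S T ω) ∂μ ≤ (5/2) * ∫ ω, Rp ω ∂μ := by
    have hpt : ∀ ω, frob (S T ω) ≤ Y T ω + (5/2) * Real.sqrt (Q T ω) := by
      intro ω
      rw [hYdef]
      simp only
      have := frob_le_sqrt_sq_add (S T ω) (Q T ω) (hQnn T ω)
      linarith
    have h1 : ∫ ω, frob (S T ω) ∂μ ≤ ∫ ω, (Y T ω + (5/2) * Real.sqrt (Q T ω)) ∂μ :=
      integral_mono hfrobSTint ((hYint T le_rfl).add (hsqrtQTint.const_mul (5/2))) hpt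
    rw [integral_add (hYint T le_rfl) (hsqrtQTint.const_mul (5/2)),
      MeasureTheory.integral_const_mul] at h1
    have h2 : ∫ ω, Real.sqrt (Q T ω) ∂μ ≤ ∫ ω, Rp ω ∂μ :=
      integral_mono hsqrtQTint hRpint hsqrtQ_le_Rp
    calc ∫ ω, frob (S T ω) ∂μ ≤ ∫ ω, Y T ω ∂μ + (5/2) * ∫ ω, Real.sqrt (Q T ω) ∂μ := h1
      _ ≤ (5/2) * ∫ ω, Real.sqrt (Q T ω) ∂μ := by linarith
      _ ≤ (5/2) * ∫ ω, Rp ω ∂μ := by linarith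
  have hc : (5/2 : ℝ) ≤ 2 * Real.sqrt 2 := by
    nlinarith [Real.sq_sqrt (by norm_num : (0:ℝ) ≤ 2), Real.sqrt_nonneg 2]
  have hIRp : 0 ≤ ∫ ω, Rp ω ∂μ := integral_nonneg hRp_nonneg
  calc ∫ ω, frob (∑ t ∈ Finset.Icc 1 T, V t ω) ∂μ = ∫ ω, frob (S T ω) ∂μ := by rw [hSdef]
    _ ≤ (5/2) * ∫ ω, Rp ω ∂μ := hmain
    _ ≤ (2 * Real.sqrt 2) * ∫ ω, Rp ω ∂μ := mul_le_mul_of_nonneg_right hc hIRp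
    _ = 2 * Real.sqrt 2 * ∫ ω, (∑ t ∈ Finset.Icc 1 T, frob (V t ω) ^ p) ^ (1/p) ∂μ := by
        rw [hRpdef]

end
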